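/- Let E be a Riesz space with the principal projection property, let e₁, e₂ ∈ E be weak order units, and let F be a Dedekind complete Riesz space. Then: (a) the maps θ₁ : C_{e₁} → C_{e₂}, p ↦ P_p(e₂), and θ₂ : C_{e₂} → C_{e₁}, q ↦ P_q(e₁), are mutually inverse lattice isomorphisms; (b) for every μ ∈ ba(C_{e₂},F) one has μ ∘ θ₁ ∈ ba(C_{e₁},F), and for every μ ∈ ba(C_{e₁},F) one has μ ∘ θ₂ ∈ ba(C_{e₂},F); (c) the maps Φ₁ : ba(C_{e₂},F) → ba(C_{e₁},F), μ ↦ μ ∘ θ₁, and Φ₂ : ba(C_{e₁},F) → ba(C_{e₂},F), μ ↦ μ ∘ θ₂, are mutually inverse Riesz isomorphisms. -/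

import Mathlib

open scoped Classical

noncomputable section

namespace RieszPaper

universe u v w

/-! ### Basic Riesz space notions -/

section BasicDefs

variable {E : Type u} [Lattice E] [AddCommGroup E]

/-- The positive part `x ⊔ 0`. -/
def rpos (x : E) : E := x ⊔ 0

/-- The set of components of `e`, i.e. elements `p` with `p ⊓ (e - p) = 0`. -/
def Comp (e : E) : Set E := {p | p ⊓ (e - p) = 0}

/-- Disjoint complement of a set. -/
def disjC (S : Set E) : Set E := {x | ∀ y ∈ S, |x| ⊓ |y| = 0}

/-- The principal band generated by `f` (as double disjoint complement). -/
def pBand (f : E) : Set E := disjC (disjC {f})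

/-- `e` is a weak order unit: `e > 0` and the band generated by `e` is all of `E`. -/
def IsWeakUnit (e : E) : Prop := 0 < e ∧ ∀ x : E, 0 ≤ x → x ⊓ e = 0 → x = 0

/-- The chain `x ⊓ n•|f|`, whose supremum is the band projection of `x ≥ 0`
onto the band generated by `f`. -/
def projChain (f x : E) : Set E := {y | ∃ n : ℕ, y = x ⊓ n • |f|}

/-- Band projection of a positive element onto the band generated by `f`. -/
def projP (f x : E) : E := if h : ∃ s, IsLUB (projChain f x) s then h.choose else 0

/-- Band projection onto the principal band generated by `f`. -/
def proj (f x : E) : E := projP f (rpos x) - projP f (rpos (-x))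

/-- The principal projection property. -/
def HasPPP (α : Type u) [Lattice α] [AddCommGroup α] : Prop :=
  ∀ f x : α, 0 ≤ x → ∃ s, IsLUB (projChain f x) s

/-- A subset is sequentially order closed. -/
def SeqOrderClosed (D : Set E) : Prop :=
  (∀ (x : ℕ → E) (l : E), (∀ n, x n ∈ D) → Monotone x → IsLUB (Set.range x) l → l ∈ D) ∧
  (∀ (x : ℕ → E) (l : E), (∀ n, x n ∈ D) → Antitone x → IsGLB (Set.range x) l → l ∈ D)

end BasicDefs

/-! ### Charges on components -/

section Charges

variable {E : Type u} [Lattice E] [AddCommGroup E]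
variable {F : Type v} [Lattice F] [AddCommGroup F]

/-- `μ` is an `F`-valued signed charge on the components of `e`. -/
def IsChargeOn (e : E) (μ : E → F) : Prop :=
  μ 0 = 0 ∧ ∀ p q : E, p ∈ Comp e → q ∈ Comp e → p ⊓ q = 0 → μ (p + q) = μ p + μ q

/-- `μ` is order bounded on the components of `e`. -/
def OrdBddOn (e : E) (μ : E → F) : Prop :=
  ∃ g : F, 0 ≤ g ∧ ∀ p ∈ Comp e, |μ p| ≤ g

/-- `ba(C_e, F)`: order bounded signed `F`-valued charges on the components of `e`. -/
def baSet (e : E) : Set (E → F) := {μ | IsChargeOn e μ ∧ OrdBddOn e μ}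

/-- The order on charges: `μ ≤ ν` iff `ν - μ` is positive on components. -/
def baLe (e : E) (μ ν : E → F) : Prop := ∀ p ∈ Comp e, μ p ≤ ν p

/-- `η` is the least upper bound of `S ⊆ ba(C_e,F)` within `ba(C_e,F)`. -/
def IsLUBba (e : E) (S : Set (E → F)) (η : E → F) : Prop :=
  η ∈ baSet e ∧ (∀ μ ∈ S, baLe e μ η) ∧
    ∀ ξ ∈ baSet e, (∀ μ ∈ S, baLe e μ ξ) → baLe e η ξ

/-- `η` is the greatest lower bound of `S ⊆ ba(C_e,F)` within `ba(C_e,F)`. -/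
def IsGLBba (e : E) (S : Set (E → F)) (η : E → F) : Prop :=
  η ∈ baSet e ∧ (∀ μ ∈ S, baLe e η μ) ∧
    ∀ ξ ∈ baSet e, (∀ μ ∈ S, baLe e ξ μ) → baLe e ξ η

end Charges

section ChargesCCL

variable {E : Type u} [Lattice E] [AddCommGroup E]
variable {F : Type v} [ConditionallyCompleteLattice F] [AddCommGroup F]

/-- Pointwise formula for the supremum of two charges. -/
def chSupAt (e : E) (μ ν : E → F) (p : E) : F :=
  sSup {v | ∃ q, q ∈ Comp e ∧ q ≤ p ∧ v = μ q + ν (p - q)}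

/-- Pointwise formula for the infimum of two charges. -/
def chInfAt (e : E) (μ ν : E → F) (p : E) : F :=
  sInf {v | ∃ q, q ∈ Comp e ∧ q ≤ p ∧ v = μ q + ν (p - q)}

/-- The modulus of a charge, via the Riesz–Kantorovich-type formula. -/
def chargeAbs (e : E) (μ : E → F) : E → F :=
  fun p => sSup {v | ∃ q, q ∈ Comp e ∧ q ≤ p ∧ v = μ q - μ (p - q)}

/-- The positive part of a charge. -/
def chargePos (e : E) (μ : E → F) : E → F :=
  fun p => sSup {v | ∃ q, q ∈ Comp e ∧ q ≤ p ∧ v = μ q}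

/-- The negative part of a charge. -/
def chargeNeg (e : E) (μ : E → F) : E → F :=
  fun p => sSup {v | ∃ q, q ∈ Comp e ∧ q ≤ p ∧ v = -(μ q)}

end ChargesCCL

/-! ### Operators -/

section Ops

variable {E : Type u} [Lattice E] [AddCommGroup E] [Module ℝ E]

def PosOn (Lp : Set E) (φ : E → E) : Prop := ∀ f ∈ Lp, 0 ≤ f → 0 ≤ φ f

def AddOn (Lp : Set E) (φ : E → E) : Prop :=
  ∀ f g : E, f ∈ Lp → g ∈ Lp → φ (f + g) = φ f + φ g

def SmulOn (Lp : Set E) (φ : E → E) : Prop :=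
  ∀ (r : ℝ) (f : E), f ∈ Lp → φ (r • f) = r • φ f

/-- `φ` is a regular operator on `Lp`: a difference of two positive linear maps. -/
def RegularOn (Lp : Set E) (φ : E → E) : Prop :=
  ∃ ψ₁ ψ₂ : E → E, AddOn Lp ψ₁ ∧ AddOn Lp ψ₂ ∧ SmulOn Lp ψ₁ ∧ SmulOn Lp ψ₂ ∧
    PosOn Lp ψ₁ ∧ PosOn Lp ψ₂ ∧ ∀ f ∈ Lp, φ f = ψ₁ f - ψ₂ f

/-- Uniform convergence of a sequence with regulator `u`. -/
def UnifConv (u : E) (s : ℕ → E) (f : E) : Prop :=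
  ∃ ε : ℕ → ℝ, Antitone ε ∧ Filter.Tendsto ε Filter.atTop (nhds 0) ∧
    ∀ n, |f - s n| ≤ ε n • u

end Ops

/-! ### Conditional expectation operators -/

section CondExp

variable {E : Type u} [ConditionallyCompleteLattice E] [AddCommGroup E] [Module ℝ E]

/-- `(E, e, T)` is a conditional Riesz triple: `e` is a weak order unit and `T` is a
strictly positive conditional expectation operator with `T e = e` whose range is a
Dedekind complete Riesz subspace. -/
structure IsCondTriple (e : E) (T : E →ₗ[ℝ] E) : Prop where
  weakUnit : IsWeakUnit e
  pos : ∀ x : E, 0 ≤ x → 0 ≤ T x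
  strictPos : ∀ x : E, 0 < x → 0 < T x
  ordCont : ∀ (A : Set E) (s : E), A.Nonempty → DirectedOn (· ≤ ·) A →
    IsLUB A s → IsLUB (T '' A) (T s)
  idem : ∀ x : E, T (T x) = T x
  unitFix : T e = e
  rangeSupClosed : ∀ x y : E, x ∈ Set.range T → y ∈ Set.range T → x ⊔ y ∈ Set.range T
  rangeDedekind : ∀ A : Set E, A ⊆ Set.range T → A.Nonempty → BddAbove A →
    sSup A ∈ Set.range T

end CondExp

/-! ### Universal completion and T-universal completeness -/

section Univ

variable {E : Type u} {G : Type v}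
variable [ConditionallyCompleteLattice E] [AddCommGroup E] [Module ℝ E]
variable [ConditionallyCompleteLattice G] [AddCommGroup G] [Module ℝ G]

/-- `j : E → G` realizes `G` as a universal completion of `E`. -/
structure IsUnivCompletion (j : E →ₗ[ℝ] G) : Prop where
  bipos : ∀ x : E, 0 ≤ j x ↔ 0 ≤ x
  latHom : ∀ x y : E, j (x ⊔ y) = j x ⊔ j y
  dense : ∀ z : G, 0 < z → ∃ x : E, 0 < j x ∧ j x ≤ z
  univComplete : ∀ S : Set G, (∀ x ∈ S, 0 ≤ x) →
    S.Pairwise (fun a b => a ⊓ b = 0) → BddAbove S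

/-- `E` is `T`-universally complete (relative to the universal completion `j : E → G`):
every nonempty upwards directed subset `A ⊆ E` such that `j[T[A]]` is bounded above in
`G` has a supremum in `E`. -/
def TUnivComplete (T : E →ₗ[ℝ] E) (j : E →ₗ[ℝ] G) : Prop :=
  ∀ A : Set E, A.Nonempty → DirectedOn (· ≤ ·) A →
    BddAbove (⇑j '' (⇑T '' A)) → BddAbove A

end Univ

/-- `mul` is a commutative `f`-algebra multiplication with unit `u`. -/
structure IsFAlgebraMul {G : Type v} [Lattice G] [AddCommGroup G] [Module ℝ G]
    (u : G) (mul : G → G → G) : Prop where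
  comm : ∀ x y, mul x y = mul y x
  assoc : ∀ x y z, mul (mul x y) z = mul x (mul y z)
  add_left : ∀ x y z, mul (x + y) z = mul x z + mul y z
  smul_left : ∀ (r : ℝ) (x y), mul (r • x) y = r • mul x y
  one_mul : ∀ x, mul u x = x
  mul_nonneg : ∀ x y, 0 ≤ x → 0 ≤ y → 0 ≤ mul x y
  disj : ∀ x y z, x ⊓ y = 0 → 0 ≤ z → mul x z ⊓ y = 0

/-! ### Bundled T-universally complete conditional Riesz triples -/

/-- A `T`-universally complete conditional Riesz triple `(E, e, T)`, together with a
universal completion `j : E → G` carrying its `f`-algebra multiplication (with unit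
`j e`).  Since `E = L¹(T)` is an `R(T)`-module, products of elements of `L^∞(T)` with
elements of `E` again lie in `E` (`mulClosed`). -/
structure CRT (E : Type u) (G : Type v)
    [ConditionallyCompleteLattice E] [AddCommGroup E] [Module ℝ E]
    [CovariantClass E E (· + ·) (· ≤ ·)] [PosSMulMono ℝ E]
    [ConditionallyCompleteLattice G] [AddCommGroup G] [Module ℝ G]
    [CovariantClass G G (· + ·) (· ≤ ·)] [PosSMulMono ℝ G] where
  e : E
  T : E →ₗ[ℝ] E
  j : E →ₗ[ℝ] G
  mul : G → G → G
  triple : IsCondTriple e T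
  compl : IsUnivCompletion j
  falg : IsFAlgebraMul (j e) mul
  tuc : TUnivComplete T j
  mulClosed : ∀ f g : E, (∃ h : E, h ∈ Set.range T ∧ 0 ≤ h ∧ |f| ≤ h) →
    mul (j f) (j g) ∈ Set.range ⇑j

namespace CRT

variable {E : Type u} {G : Type v}
variable [ConditionallyCompleteLattice E] [AddCommGroup E] [Module ℝ E]
  [CovariantClass E E (· + ·) (· ≤ ·)] [PosSMulMono ℝ E]
variable [ConditionallyCompleteLattice G] [AddCommGroup G] [Module ℝ G]
  [CovariantClass G G (· + ·) (· ≤ ·)] [PosSMulMono ℝ G]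
variable (C : CRT E G)

/-- The range `R(T)`. -/
def R : Set E := Set.range ⇑C.T

/-- The product `g · f` of two elements of `E = L¹(T)`, computed in the universal
completion (meaningful whenever the product lies again in `E`, e.g. for
`g ∈ R(T)` or `g ∈ L^∞(T)`). -/
def sm (g f : E) : E := @Function.invFun E G ⟨0⟩ (⇑C.j) (C.mul (C.j g) (C.j f))

/-- `L^∞(T) = {f : |f| ≤ g for some g ∈ R(T)₊}`. -/
def Linf : Set E := {f | ∃ h ∈ C.R, 0 ≤ h ∧ |f| ≤ h}

/-- The `R(T)`-valued norm `‖f‖_{T,1} = T |f|`. -/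
def nrm1 (f : E) : E := C.T |f|

/-- The `R(T)`-valued norm `‖f‖_{T,∞} = inf {α ∈ R(T)₊ : |f| ≤ α}`. -/
def nrmInf (f : E) : E := sInf {a | a ∈ C.R ∧ 0 ≤ a ∧ |f| ≤ a}

/-- Order bounded signed `R(T)`-valued charges on the components of `u`. -/
def baR (u : E) : Set (E → E) :=
  {μ | IsChargeOn u μ ∧ (∀ p ∈ Comp u, μ p ∈ C.R) ∧
     ∃ g ∈ C.R, 0 ≤ g ∧ ∀ p ∈ Comp u, |μ p| ≤ g}

/-- `ba(T)`: the `T`-absolutely continuous charges in `ba(C_e, R(T))`. -/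
def baT : Set (E → E) :=
  {μ | μ ∈ C.baR C.e ∧ ∀ p ∈ Comp C.e, μ p ∈ pBand (C.T p)}

/-- `x = ∑ αᵢ pᵢ` is a standard representation of the `e`-step function `x` with
`R(T)`-coefficients. -/
def IsStdRep (x : E) (n : ℕ) (α p : Fin n → E) : Prop :=
  (∀ i, α i ∈ C.R) ∧ (∀ i, p i ∈ Comp C.e) ∧
  (∀ i j, i ≠ j → p i ⊓ p j = 0) ∧ (∑ i, p i) = C.e ∧
  x = ∑ i, C.sm (α i) (p i)

/-- `S_e(T)`: the `e`-step functions with `R(T)`-coefficients. -/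
def Steps : Set E := {x | ∃ (n : ℕ) (α p : Fin n → E), C.IsStdRep x n α p}

/-- The integral `I_μ` of a step function: `I_μ (∑ αᵢ pᵢ) = ∑ αᵢ μ(pᵢ)`. -/
def Imu (μ : E → E) (x : E) : E :=
  @Classical.epsilon E ⟨0⟩ fun v =>
    ∃ (n : ℕ) (α p : Fin n → E), C.IsStdRep x n α p ∧ v = ∑ i, C.sm (α i) (μ (p i))

/-- The integral of a positive element of `L^∞(T)` with respect to a positive charge. -/
def intPos (μ : E → E) (f : E) : E :=
  sSup {v | ∃ g ∈ C.Steps, 0 ≤ g ∧ g ≤ f ∧ v = C.Imu μ g}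

/-- The integral `∫ f dμ = ∫ f⁺ dμ⁺ − ∫ f⁻ dμ⁺ − ∫ f⁺ dμ⁻ + ∫ f⁻ dμ⁻`. -/
def integral (μ : E → E) (f : E) : E :=
  C.intPos (chargePos C.e μ) (rpos f) - C.intPos (chargePos C.e μ) (rpos (-f))
    - C.intPos (chargeNeg C.e μ) (rpos f) + C.intPos (chargeNeg C.e μ) (rpos (-f))

/-- Membership in `L^r(Lp, R(T))`: regular linear operators with values in `R(T)`. -/
structure MemLr (Lp : Set E) (φ : E → E) : Prop where
  add : AddOn Lp φ
  smul : SmulOn Lp φ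
  mem : ∀ f ∈ Lp, φ f ∈ C.R
  regular : RegularOn Lp φ

/-- Membership in the `T`-strong dual of `(Lp, nrm)`: `R(T)`-linear, regular,
`nrm`-bounded maps into `R(T)`. -/
structure MemDual (Lp : Set E) (nrm : E → E) (φ : E → E) : Prop where
  add : AddOn Lp φ
  smul : SmulOn Lp φ
  modHom : ∀ g f : E, g ∈ C.R → f ∈ Lp → φ (C.sm g f) = C.sm g (φ f)
  mem : ∀ f ∈ Lp, φ f ∈ C.R
  regular : RegularOn Lp φ
  bdd : ∃ k ∈ C.R, 0 ≤ k ∧ ∀ f ∈ Lp, |φ f| ≤ C.sm k (nrm f)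

/-- The `R(T)`-valued norm on the `T`-strong dual. -/
def dualNorm (Lp : Set E) (nrm : E → E) (φ : E → E) : E :=
  sInf {g | g ∈ C.R ∧ 0 ≤ g ∧ ∀ f ∈ Lp, |φ f| ≤ C.sm g (nrm f)}

/-- `|φ| ≤ |ψ|` in `L^r(Lp, R(T))`, via the Riesz–Kantorovich formula. -/
def OpAbsLe (Lp : Set E) (φ ψ : E → E) : Prop :=
  ∀ f ∈ Lp, 0 ≤ f → ∀ g ∈ Lp, |g| ≤ f →
    |φ g| ≤ sSup {v | ∃ h, h ∈ Lp ∧ |h| ≤ f ∧ v = |ψ h|}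

/-- The canonical partial inverse of `h` in `R(T)`: the element `g` of the band
generated by `|h|` with `h g = P_{|h|} e`. -/
def pinv (h : E) : E :=
  @Classical.epsilon E ⟨0⟩ fun g =>
    g ∈ C.R ∧ g ∈ pBand (|h|) ∧ C.sm h g = proj (|h|) C.e

end CRT

/-! ### Bundled Dedekind complete Riesz spaces, for existential statements -/

structure BRiesz : Type (u + 1) where
  carrier : Type u
  [ccl : ConditionallyCompleteLattice carrier]
  [grp : AddCommGroup carrier]
  [mod : Module ℝ carrier]
  [cov : CovariantClass carrier carrier (· + ·) (· ≤ ·)]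
  [psm : PosSMulMono ℝ carrier]

attribute [instance] BRiesz.ccl BRiesz.grp BRiesz.mod BRiesz.cov BRiesz.psm

/-- `(F, ẽ, T̃)` together with `i : E → F` is a `T`-universal completion of `(E, e, T)`. -/
structure IsTUnivCompletion
    {E : Type u} [ConditionallyCompleteLattice E] [AddCommGroup E] [Module ℝ E]
    {F : Type v} [ConditionallyCompleteLattice F] [AddCommGroup F] [Module ℝ F]
    (e : E) (T : E →ₗ[ℝ] E) (e' : F) (T' : F →ₗ[ℝ] F) (i : E →ₗ[ℝ] F) : Prop where
  triple : IsCondTriple e' T'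
  tuniv : ∃ (U : BRiesz.{v}) (j : F →ₗ[ℝ] U.carrier),
    IsUnivCompletion j ∧ TUnivComplete T' j
  bipos : ∀ x : E, 0 ≤ i x ↔ 0 ≤ x
  latHom : ∀ x y : E, i (x ⊔ y) = i x ⊔ i y
  dense : ∀ z : F, 0 < z → ∃ x : E, 0 < i x ∧ i x ≤ z
  unit : i e = e'
  comm : ∀ x : E, T' (i x) = i (T x)


/-! ### Powers via functional calculus, for the spaces `L^p(T)` -/

/-- A `T`-universally complete conditional Riesz triple together with the power
functions `x ↦ x^p` (`x ≥ 0`, `p > 0`) of the functional calculus on the universal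
completion. -/
structure CRTP (E : Type u) (G : Type v)
    [ConditionallyCompleteLattice E] [AddCommGroup E] [Module ℝ E]
    [CovariantClass E E (· + ·) (· ≤ ·)] [PosSMulMono ℝ E]
    [ConditionallyCompleteLattice G] [AddCommGroup G] [Module ℝ G]
    [CovariantClass G G (· + ·) (· ≤ ·)] [PosSMulMono ℝ G]
    extends CRT E G where
  epow : G → ℝ → G
  epow_one : ∀ x : G, 0 ≤ x → epow x 1 = x
  epow_nonneg : ∀ (x : G) (p : ℝ), 0 ≤ x → 0 < p → 0 ≤ epow x p
  epow_mono : ∀ (x y : G) (p : ℝ), 0 ≤ x → x ≤ y → 0 < p → epow x p ≤ epow y p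
  epow_unit : ∀ p : ℝ, 0 < p → epow (toCRT.j toCRT.e) p = toCRT.j toCRT.e
  epow_exp_mul : ∀ (x : G) (p q : ℝ), 0 ≤ x → 0 < p → 0 < q →
    epow (epow x p) q = epow x (p * q)
  epow_mul : ∀ (x y : G) (p : ℝ), 0 ≤ x → 0 ≤ y → 0 < p →
    epow (toCRT.mul x y) p = toCRT.mul (epow x p) (epow y p)
  epow_succ : ∀ (x : G) (n : ℕ), 0 ≤ x → 0 < n →
    epow x ((n : ℝ) + 1) = toCRT.mul (epow x (n : ℝ)) x
  epow_sup : ∀ (x y : G) (p : ℝ), 0 ≤ x → 0 ≤ y → 0 < p →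
    epow (x ⊔ y) p = epow x p ⊔ epow y p
  epow_rangeT : ∀ (x : E) (p : ℝ), 0 ≤ x → 0 < p → x ∈ Set.range ⇑toCRT.T →
    epow (toCRT.j x) p ∈ ⇑toCRT.j '' Set.range ⇑toCRT.T

namespace CRTP

variable {E : Type u} {G : Type v}
variable [ConditionallyCompleteLattice E] [AddCommGroup E] [Module ℝ E]
  [CovariantClass E E (· + ·) (· ≤ ·)] [PosSMulMono ℝ E]
variable [ConditionallyCompleteLattice G] [AddCommGroup G] [Module ℝ G]
  [CovariantClass G G (· + ·) (· ≤ ·)] [PosSMulMono ℝ G]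
variable (C : CRTP E G)

/-- the `p`-th power of `x ∈ E`, computed in the universal completion. -/
def powE (x : E) (p : ℝ) : E :=
  @Function.invFun E G ⟨0⟩ (⇑C.toCRT.j) (C.epow (C.toCRT.j x) p)

/-- `L^p(T) = {f ∈ L¹(T) : |f|^p ∈ L¹(T)}` for `p ∈ [1, ∞)`. -/
def LpSet (p : ℝ) : Set E := {f | C.epow (C.toCRT.j |f|) p ∈ Set.range ⇑C.toCRT.j}

/-- The `R(T)`-valued norm `‖f‖_{T,p} = (T |f|^p)^{1/p}`. -/
def nrmP (p : ℝ) (f : E) : E := C.powE (C.toCRT.T (C.powE |f| p)) (1 / p)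

end CRTP

/-!
For a weak unit `v` and `p ≥ 0`, the band projection `P_p v` is a component of `v` that
generates the same band as `p`: an element `z ≥ 0` is disjoint from `P_p v` exactly when it
is disjoint from `p`. A component of `v` is determined by the positive elements disjoint
from it, so `θ₂ ∘ θ₁` fixes every component of `e₁`, and `θ₁` preserves suprema and sums of
disjoint components; infima follow by passing to complements. Composing with a bijection of
components that preserves disjoint sums carries charges to charges, their order and their
suprema.
-/

section LatticeOrderedGroup

variable {E : Type u} [Lattice E] [AddCommGroup E] {a b c z : E}

lemma inf_eq_zero_of_le_left (ha : 0 ≤ a) (hc : 0 ≤ c) (hab : a ≤ b) (h : b ⊓ c = 0) :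
    a ⊓ c = 0 :=
  le_antisymm ((inf_le_inf_right c hab).trans h.le) (le_inf ha hc)

lemma inf_eq_zero_of_le_right (ha : 0 ≤ a) (hc : 0 ≤ c) (hcb : c ≤ b) (h : a ⊓ b = 0) :
    a ⊓ c = 0 :=
  le_antisymm ((inf_le_inf_left a hcb).trans h.le) (le_inf ha hc)

variable [AddLeftMono E]

lemma inf_add_le_inf_add_inf (ha : 0 ≤ a) (hb : 0 ≤ b) (hc : 0 ≤ c) :
    a ⊓ (b + c) ≤ a ⊓ b + a ⊓ c := by
  have hleft : a ⊓ (b + c) ≤ a ⊓ b + a :=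
    inf_le_left.trans (le_add_of_nonneg_left (le_inf ha hb))
  have hright : a ⊓ (b + c) ≤ a ⊓ b + c :=
    calc a ⊓ (b + c) ≤ (a + c) ⊓ (b + c) := inf_le_inf_right _ (le_add_of_nonneg_right hc)
      _ = a ⊓ b + c := (inf_add a b c).symm
  calc a ⊓ (b + c) ≤ (a ⊓ b + a) ⊓ (a ⊓ b + c) := le_inf hleft hright
    _ = a ⊓ b + a ⊓ c := (add_inf a c (a ⊓ b)).symm

lemma inf_add_eq_zero (ha : 0 ≤ a) (hb : 0 ≤ b) (hc : 0 ≤ c) (hab : a ⊓ b = 0)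
    (hac : a ⊓ c = 0) : a ⊓ (b + c) = 0 :=
  le_antisymm ((inf_add_le_inf_add_inf ha hb hc).trans_eq (by rw [hab, hac, add_zero]))
    (le_inf ha (add_nonneg hb hc))

lemma inf_nsmul_eq_zero (ha : 0 ≤ a) (hb : 0 ≤ b) (h : a ⊓ b = 0) (n : ℕ) :
    a ⊓ n • b = 0 := by
  induction n with
  | zero => rw [zero_nsmul, inf_eq_right.2 ha]
  | succ n ih => rw [succ_nsmul]; exact inf_add_eq_zero ha (nsmul_nonneg hb n) hb ih h

lemma inf_sup_eq_zero_iff (hz : 0 ≤ z) (ha : 0 ≤ a) (hb : 0 ≤ b) :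
    z ⊓ (a ⊔ b) = 0 ↔ z ⊓ a = 0 ∧ z ⊓ b = 0 := by
  refine ⟨fun h => ⟨inf_eq_zero_of_le_right hz ha le_sup_left h,
    inf_eq_zero_of_le_right hz hb le_sup_right h⟩, fun ⟨hza, hzb⟩ => ?_⟩
  exact inf_eq_zero_of_le_right hz (le_sup_of_le_left ha)
    (sup_le (le_add_of_nonneg_right hb) (le_add_of_nonneg_left ha))
    (inf_add_eq_zero hz ha hb hza hzb)

lemma add_eq_sup_of_inf_eq_zero (h : a ⊓ b = 0) : a + b = a ⊔ b := by
  rw [← inf_add_sup a b, h, zero_add]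

end LatticeOrderedGroup

section Components

variable {E : Type u} [Lattice E] [AddCommGroup E] {e p q : E}

lemma nonneg_of_mem_comp (hp : p ∈ Comp e) : 0 ≤ p := by
  rw [← hp]; exact inf_le_left

lemma sub_nonneg_of_mem_comp (hp : p ∈ Comp e) : 0 ≤ e - p := by
  rw [← hp]; exact inf_le_right

lemma sub_mem_comp (hp : p ∈ Comp e) : e - p ∈ Comp e := by
  show (e - p) ⊓ (e - (e - p)) = 0
  rw [sub_sub_cancel, inf_comm]
  exact hp

variable [AddLeftMono E]

lemma le_of_mem_comp (hp : p ∈ Comp e) : p ≤ e :=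
  sub_nonneg.1 (sub_nonneg_of_mem_comp hp)

lemma sup_mem_comp (hp : p ∈ Comp e) (hq : q ∈ Comp e) : p ⊔ q ∈ Comp e := by
  have hp' := sub_nonneg_of_mem_comp hp
  have hq' := sub_nonneg_of_mem_comp hq
  show (p ⊔ q) ⊓ (e - (p ⊔ q)) = 0
  rw [sub_sup, inf_comm, inf_sup_eq_zero_iff (le_inf hp' hq') (nonneg_of_mem_comp hp)
    (nonneg_of_mem_comp hq)]
  constructor
  · exact inf_eq_zero_of_le_left (le_inf hp' hq') (nonneg_of_mem_comp hp) inf_le_left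
      (by rw [inf_comm]; exact hp)
  · exact inf_eq_zero_of_le_left (le_inf hp' hq') (nonneg_of_mem_comp hq) inf_le_right
      (by rw [inf_comm]; exact hq)

lemma le_of_mem_comp_of_inf_sub_eq_zero (hp : p ∈ Comp e) (hq : q ∈ Comp e)
    (h : q ⊓ (e - p) = 0) : q ≤ p :=
  calc q = q ⊓ (p + (e - p)) := by rw [add_sub_cancel, inf_eq_left.2 (le_of_mem_comp hq)]
    _ ≤ q ⊓ p + q ⊓ (e - p) :=
        inf_add_le_inf_add_inf (nonneg_of_mem_comp hq) (nonneg_of_mem_comp hp)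
          (sub_nonneg_of_mem_comp hp)
    _ ≤ p := by rw [h, add_zero]; exact inf_le_right

lemma comp_ext (hp : p ∈ Comp e) (hq : q ∈ Comp e)
    (h : ∀ z : E, 0 ≤ z → (z ⊓ p = 0 ↔ z ⊓ q = 0)) : p = q := by
  have hpq : (e - p) ⊓ q = 0 := by rw [← h _ (sub_nonneg_of_mem_comp hp), inf_comm]; exact hp
  have hqp : (e - q) ⊓ p = 0 := by rw [h _ (sub_nonneg_of_mem_comp hq), inf_comm]; exact hq
  rw [inf_comm] at hpq hqp
  exact le_antisymm (le_of_mem_comp_of_inf_sub_eq_zero hq hp hqp)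
    (le_of_mem_comp_of_inf_sub_eq_zero hp hq hpq)

end Components

section Projections

variable {E : Type u} [Lattice E] [AddCommGroup E] {f x z : E}
variable (hppp : HasPPP E)
include hppp

lemma projP_isLUB (hx : 0 ≤ x) : IsLUB (projChain f x) (projP f x) := by
  rw [projP, dif_pos (hppp f x hx)]
  exact (hppp f x hx).choose_spec

lemma projP_nonneg (hx : 0 ≤ x) : 0 ≤ projP f x :=
  (projP_isLUB hppp hx).1 ⟨0, by rw [zero_nsmul, inf_eq_right.2 hx]⟩

lemma projP_le_self (hx : 0 ≤ x) : projP f x ≤ x :=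
  (projP_isLUB hppp hx).2 (by rintro _ ⟨n, rfl⟩; exact inf_le_left)

variable [AddLeftMono E]

lemma sub_projP_inf_abs_eq_zero (hx : 0 ≤ x) : (x - projP f x) ⊓ |f| = 0 := by
  set P := projP f x
  have hP := projP_isLUB hppp (f := f) hx
  set d := (x - P) ⊓ |f|
  -- adding `d` to a chain element stays below the next one, so `P - d` bounds the chain
  have hstep : ∀ n : ℕ, x ⊓ n • |f| + d ≤ P := fun n =>
    calc x ⊓ n • |f| + d ≤ x ⊓ n • |f| + (x - x ⊓ n • |f|) ⊓ |f| :=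
          add_le_add le_rfl (inf_le_inf_right _ (sub_le_sub_left (hP.1 ⟨n, rfl⟩) x))
      _ = x ⊓ (x ⊓ n • |f| + |f|) := by rw [add_inf, add_sub_cancel]
      _ ≤ x ⊓ (n + 1) • |f| := by
          rw [succ_nsmul]; exact inf_le_inf_left x (add_le_add inf_le_right le_rfl)
      _ ≤ P := hP.1 ⟨n + 1, rfl⟩
  have hd : P ≤ P - d := hP.2 (by rintro _ ⟨n, rfl⟩; exact le_sub_iff_add_le.2 (hstep n))
  exact le_antisymm (by simpa using hd)
    (le_inf (sub_nonneg.2 (projP_le_self hppp hx)) (abs_nonneg f))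

lemma inf_projP_eq_zero (hx : 0 ≤ x) (hz : 0 ≤ z) (hzf : z ⊓ |f| = 0) :
    z ⊓ projP f x = 0 := by
  set P := projP f x
  have hP := projP_isLUB hppp (f := f) hx
  set w := z ⊓ P
  have hw : 0 ≤ w := le_inf hz (projP_nonneg hppp hx)
  -- chain elements `y` are disjoint from `w`, so `y + w = y ⊔ w ≤ P`
  have hbound : P ≤ P - w := hP.2 <| by
    rintro _ ⟨n, rfl⟩
    have hy : 0 ≤ x ⊓ n • |f| := le_inf hx (nsmul_nonneg (abs_nonneg f) n)
    have hzy : z ⊓ (x ⊓ n • |f|) = 0 :=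
      inf_eq_zero_of_le_right hz hy inf_le_right (inf_nsmul_eq_zero hz (abs_nonneg f) hzf n)
    have hyw : (x ⊓ n • |f|) ⊓ w = 0 := by
      rw [inf_comm]; exact inf_eq_zero_of_le_left hw hy inf_le_left hzy
    rw [le_sub_iff_add_le, add_eq_sup_of_inf_eq_zero hyw]
    exact sup_le (hP.1 ⟨n, rfl⟩) inf_le_right
  exact le_antisymm (by simpa using hbound) hw

lemma projP_eq_zero_of_inf_abs_eq_zero (hx : 0 ≤ x) (h : x ⊓ |f| = 0) : projP f x = 0 := by
  have hP := projP_nonneg hppp (f := f) hx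
  have hPf : projP f x ⊓ |f| = 0 :=
    inf_eq_zero_of_le_left hP (abs_nonneg f) (projP_le_self hppp hx) h
  simpa using inf_projP_eq_zero hppp hx hP hPf

lemma projP_zero_left (hx : 0 ≤ x) : projP 0 x = 0 :=
  projP_eq_zero_of_inf_abs_eq_zero hppp hx (by rw [abs_zero, inf_eq_right.2 hx])

lemma proj_of_nonneg (hx : 0 ≤ x) : proj f x = projP f x := by
  have h0 : projP f 0 = 0 :=
    projP_eq_zero_of_inf_abs_eq_zero hppp le_rfl (inf_eq_left.2 (abs_nonneg f))
  rw [proj, rpos, rpos, sup_eq_left.2 hx, sup_eq_right.2 (neg_nonpos.2 hx), h0, sub_zero]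

end Projections

section Transfer

variable {E : Type u} [Lattice E] [AddCommGroup E] [AddLeftMono E] {u v p q z : E}
variable (hppp : HasPPP E)
include hppp

lemma projP_mem_comp (hv : 0 ≤ v) : projP p v ∈ Comp v := by
  show projP p v ⊓ (v - projP p v) = 0
  rw [inf_comm]
  exact inf_projP_eq_zero hppp hv (sub_nonneg.2 (projP_le_self hppp hv))
    (sub_projP_inf_abs_eq_zero hppp hv)

lemma inf_projP_eq_zero_iff (hv : IsWeakUnit v) (hp : 0 ≤ p) (hz : 0 ≤ z) :
    z ⊓ projP p v = 0 ↔ z ⊓ p = 0 := by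
  have hv0 : 0 ≤ v := hv.1.le
  refine ⟨fun h => ?_, fun h => inf_projP_eq_zero hppp hv0 hz (by rwa [abs_of_nonneg hp])⟩
  set P := projP p v
  have hw : 0 ≤ z ⊓ p := le_inf hz hp
  have hwP : z ⊓ p ⊓ P = 0 :=
    inf_eq_zero_of_le_left hw (projP_nonneg hppp hv0) inf_le_left h
  have hwR : z ⊓ p ⊓ (v - P) = 0 := by
    have hR := sub_projP_inf_abs_eq_zero hppp (f := p) hv0
    rw [abs_of_nonneg hp, inf_comm] at hR
    exact inf_eq_zero_of_le_left hw (sub_nonneg.2 (projP_le_self hppp hv0)) inf_le_right hR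
  refine hv.2 _ hw ?_
  rw [← add_sub_cancel P v]
  exact inf_add_eq_zero hw (projP_nonneg hppp hv0) (sub_nonneg.2 (projP_le_self hppp hv0))
    hwP hwR

lemma projP_projP (hu : IsWeakUnit u) (hv : IsWeakUnit v) (hp : p ∈ Comp u) :
    projP (projP p v) u = p := by
  refine comp_ext (projP_mem_comp hppp hu.1.le) hp fun z hz => ?_
  rw [inf_projP_eq_zero_iff hppp hu (projP_nonneg hppp hv.1.le) hz,
    inf_projP_eq_zero_iff hppp hv (nonneg_of_mem_comp hp) hz]

lemma projP_of_isWeakUnit (hu : IsWeakUnit u) (hv : IsWeakUnit v) : projP u v = v := by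
  have hR := sub_projP_inf_abs_eq_zero hppp (f := u) hv.1.le
  rw [abs_of_nonneg hu.1.le] at hR
  exact (sub_eq_zero.1 (hu.2 _ (sub_nonneg.2 (projP_le_self hppp hv.1.le)) hR)).symm

lemma projP_sup (hv : IsWeakUnit v) (hp : 0 ≤ p) (hq : 0 ≤ q) :
    projP (p ⊔ q) v = projP p v ⊔ projP q v := by
  have hv0 : 0 ≤ v := hv.1.le
  refine comp_ext (projP_mem_comp hppp hv0)
    (sup_mem_comp (projP_mem_comp hppp hv0) (projP_mem_comp hppp hv0)) fun z hz => ?_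
  rw [inf_projP_eq_zero_iff hppp hv (le_sup_of_le_left hp) hz, inf_sup_eq_zero_iff hz hp hq,
    inf_sup_eq_zero_iff hz (projP_nonneg hppp hv0) (projP_nonneg hppp hv0),
    inf_projP_eq_zero_iff hppp hv hp hz, inf_projP_eq_zero_iff hppp hv hq hz]

lemma projP_inf_projP_eq_zero (hv : IsWeakUnit v) (hp : 0 ≤ p) (hq : 0 ≤ q)
    (hpq : p ⊓ q = 0) : projP p v ⊓ projP q v = 0 := by
  rw [inf_projP_eq_zero_iff hppp hv hq (projP_nonneg hppp hv.1.le), inf_comm,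
    inf_projP_eq_zero_iff hppp hv hp hq, inf_comm, hpq]

lemma projP_add (hv : IsWeakUnit v) (hp : 0 ≤ p) (hq : 0 ≤ q) (hpq : p ⊓ q = 0) :
    projP (p + q) v = projP p v + projP q v := by
  rw [add_eq_sup_of_inf_eq_zero hpq, projP_sup hppp hv hp hq,
    add_eq_sup_of_inf_eq_zero (projP_inf_projP_eq_zero hppp hv hp hq hpq)]

lemma projP_sub (hu : IsWeakUnit u) (hv : IsWeakUnit v) (hp : p ∈ Comp u) :
    projP (u - p) v = v - projP p v := by
  have hadd := projP_add hppp hv (nonneg_of_mem_comp hp) (sub_nonneg_of_mem_comp hp) hp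
  rw [add_sub_cancel, projP_of_isWeakUnit hppp hu hv] at hadd
  exact eq_sub_of_add_eq' hadd.symm

lemma projP_inf (hu : IsWeakUnit u) (hv : IsWeakUnit v) (hp : p ∈ Comp u) (hq : q ∈ Comp u) :
    projP (p ⊓ q) v = projP p v ⊓ projP q v := by
  have hpq : p ⊓ q = u - ((u - p) ⊔ (u - q)) := by rw [sub_sup, sub_sub_cancel, sub_sub_cancel]
  rw [hpq, projP_sub hppp hu hv (sup_mem_comp (sub_mem_comp hp) (sub_mem_comp hq)),
    projP_sup hppp hv (sub_nonneg_of_mem_comp hp) (sub_nonneg_of_mem_comp hq),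
    projP_sub hppp hu hv hp, projP_sub hppp hu hv hq, sub_sup, sub_sub_cancel, sub_sub_cancel]

end Transfer

section Charges

open Set

variable {E : Type u} [Lattice E] [AddCommGroup E] {F : Type v} [Lattice F]
  {u v : E} {θ θ' : E → E}

lemma baLe_comp_iff (hθ : θ '' Comp u = Comp v) (μ ν : E → F) :
    baLe u (μ ∘ θ) (ν ∘ θ) ↔ baLe v μ ν := by
  rw [baLe, baLe, ← hθ, forall_mem_image]
  rfl

variable [AddCommGroup F]

lemma comp_mem_baSet {μ : E → F} (hμ : μ ∈ baSet v) (h0 : θ 0 = 0)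
    (hθ : MapsTo θ (Comp u) (Comp v))
    (hadd : ∀ p ∈ Comp u, ∀ q ∈ Comp u, p ⊓ q = 0 → θ (p + q) = θ p + θ q ∧ θ p ⊓ θ q = 0) :
    μ ∘ θ ∈ baSet u := by
  obtain ⟨⟨hμ0, hμadd⟩, g, hg, hμg⟩ := hμ
  refine ⟨⟨by simp [h0, hμ0], fun p q hp hq hpq => ?_⟩, g, hg, fun p hp => hμg _ (hθ hp)⟩
  obtain ⟨hθadd, hθdisj⟩ := hadd p hp q hq hpq
  simp only [Function.comp_apply, hθadd]
  exact hμadd _ _ (hθ hp) (hθ hq) hθdisj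

lemma IsLUBba.comp (hθ : MapsTo θ (Comp u) (Comp v)) (hθ' : MapsTo θ' (Comp v) (Comp u))
    (hinv : InvOn θ' θ (Comp u) (Comp v)) (hba : ∀ μ ∈ baSet (F := F) v, μ ∘ θ ∈ baSet u)
    (hba' : ∀ ξ ∈ baSet (F := F) u, ξ ∘ θ' ∈ baSet v) {S : Set (E → F)} {η : E → F}
    (hη : IsLUBba v S η) : IsLUBba u ((· ∘ θ) '' S) (η ∘ θ) := by
  obtain ⟨hηba, hηub, hηleast⟩ := hη
  refine ⟨hba η hηba, forall_mem_image.2 fun μ hμ p hp => hηub μ hμ _ (hθ hp),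
    fun ξ hξ hξub p hp => ?_⟩
  have hub : ∀ μ ∈ S, baLe v μ (ξ ∘ θ') := fun μ hμ q hq => by
    simpa only [Function.comp_apply, hinv.2 hq] using hξub _ (mem_image_of_mem _ hμ) _ (hθ' hq)
  simpa only [Function.comp_apply, hinv.1 hp] using hηleast _ (hba' ξ hξ) hub _ (hθ hp)

end Charges

lemma comp_projP_mem_baSet {E : Type u} [Lattice E] [AddCommGroup E] [AddLeftMono E]
    {F : Type v} [Lattice F] [AddCommGroup F] (hppp : HasPPP E) (u : E) {v : E}
    (hv : IsWeakUnit v) {μ : E → F} (hμ : μ ∈ baSet v) : μ ∘ (projP · v) ∈ baSet u :=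
  comp_mem_baSet hμ (projP_zero_left hppp hv.1.le) (fun _ _ => projP_mem_comp hppp hv.1.le)
    fun _ hp _ hq hpq =>
      ⟨projP_add hppp hv (nonneg_of_mem_comp hp) (nonneg_of_mem_comp hq) hpq,
        projP_inf_projP_eq_zero hppp hv (nonneg_of_mem_comp hp) (nonneg_of_mem_comp hq) hpq⟩

theorem charges_independent_of_weak_unit_general
    {E : Type u} [Lattice E] [AddCommGroup E]
    [CovariantClass E E (· + ·) (· ≤ ·)]
    {F : Type v} [ConditionallyCompleteLattice F] [AddCommGroup F]
    (hppp : HasPPP E) (e₁ e₂ : E) (h₁ : IsWeakUnit e₁) (h₂ : IsWeakUnit e₂) :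
    -- (a) θ₁ and θ₂ are mutually inverse lattice isomorphisms
    (∀ p ∈ Comp e₁, proj p e₂ ∈ Comp e₂ ∧ proj (proj p e₂) e₁ = p) ∧
    (∀ q ∈ Comp e₂, proj q e₁ ∈ Comp e₁ ∧ proj (proj q e₁) e₂ = q) ∧
    (∀ p ∈ Comp e₁, ∀ q ∈ Comp e₁,
      proj (p ⊔ q) e₂ = proj p e₂ ⊔ proj q e₂ ∧
      proj (p ⊓ q) e₂ = proj p e₂ ⊓ proj q e₂) ∧
    (∀ p ∈ Comp e₂, ∀ q ∈ Comp e₂,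
      proj (p ⊔ q) e₁ = proj p e₁ ⊔ proj q e₁ ∧
      proj (p ⊓ q) e₁ = proj p e₁ ⊓ proj q e₁) ∧
    -- (b) composition with θ₁, θ₂ preserves order bounded charges
    (∀ μ ∈ baSet (F := F) e₂, (fun p => μ (proj p e₂)) ∈ baSet (F := F) e₁) ∧
    (∀ μ ∈ baSet (F := F) e₁, (fun q => μ (proj q e₁)) ∈ baSet (F := F) e₂) ∧
    -- (c) Φ₁ and Φ₂ are mutually inverse Riesz isomorphisms
    (∀ μ ∈ baSet (F := F) e₂, ∀ q ∈ Comp e₂, μ (proj (proj q e₁) e₂) = μ q) ∧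
    (∀ μ ∈ baSet (F := F) e₁, ∀ p ∈ Comp e₁, μ (proj (proj p e₂) e₁) = μ p) ∧
    (∀ μ ∈ baSet (F := F) e₂, ∀ ν ∈ baSet (F := F) e₂,
      (baLe e₂ μ ν ↔ baLe e₁ (fun p => μ (proj p e₂)) (fun p => ν (proj p e₂)))) ∧
    (∀ μ ∈ baSet (F := F) e₂, ∀ ν ∈ baSet (F := F) e₂, ∀ η : E → F,
      IsLUBba e₂ {μ, ν} η →
      IsLUBba e₁ {fun p => μ (proj p e₂), fun p => ν (proj p e₂)}
        (fun p => η (proj p e₂))) := by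
  have he₁ : 0 ≤ e₁ := h₁.1.le
  have he₂ : 0 ≤ e₂ := h₂.1.le
  simp only [proj_of_nonneg hppp he₁, proj_of_nonneg hppp he₂]
  have maps₁ : Set.MapsTo (projP · e₂) (Comp e₁) (Comp e₂) := fun _ _ => projP_mem_comp hppp he₂
  have maps₂ : Set.MapsTo (projP · e₁) (Comp e₂) (Comp e₁) := fun _ _ => projP_mem_comp hppp he₁
  have inv : Set.InvOn (projP · e₁) (projP · e₂) (Comp e₁) (Comp e₂) :=
    ⟨fun _ hp => projP_projP hppp h₁ h₂ hp, fun _ hq => projP_projP hppp h₂ h₁ hq⟩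
  have ba₁ : ∀ μ ∈ baSet (F := F) e₂, μ ∘ (projP · e₂) ∈ baSet e₁ :=
    fun _ => comp_projP_mem_baSet hppp e₁ h₂
  have ba₂ : ∀ μ ∈ baSet (F := F) e₁, μ ∘ (projP · e₁) ∈ baSet e₂ :=
    fun _ => comp_projP_mem_baSet hppp e₂ h₁
  refine ⟨fun p hp => ⟨maps₁ hp, inv.1 hp⟩, fun q hq => ⟨maps₂ hq, inv.2 hq⟩,
    fun p hp q hq => ⟨projP_sup hppp h₂ (nonneg_of_mem_comp hp) (nonneg_of_mem_comp hq),
      projP_inf hppp h₁ h₂ hp hq⟩,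
    fun p hp q hq => ⟨projP_sup hppp h₁ (nonneg_of_mem_comp hp) (nonneg_of_mem_comp hq),
      projP_inf hppp h₂ h₁ hp hq⟩,
    ba₁, ba₂, fun μ _ q hq => congrArg μ (inv.2 hq), fun μ _ p hp => congrArg μ (inv.1 hp),
    fun μ _ ν _ => (baLe_comp_iff (inv.bijOn maps₁ maps₂).image_eq μ ν).symm,
    fun μ _ ν _ η hη => ?_⟩
  have hlub := hη.comp maps₁ maps₂ inv ba₁ ba₂
  rwa [Set.image_pair] at hlub

/-- Let `E` be a Riesz space with the principal projection property,
`e₁, e₂ ∈ E` weak order units and `F` a Dedekind complete Riesz space.  Then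
(a) `θ₁ : C_{e₁} → C_{e₂}, p ↦ P_p e₂` and `θ₂ : C_{e₂} → C_{e₁}, q ↦ P_q e₁` are
mutually inverse lattice isomorphisms; (b) composition with `θ₁` (resp. `θ₂`) maps
`ba(C_{e₂},F)` into `ba(C_{e₁},F)` (resp. conversely); and (c) the induced maps
`Φ₁ : μ ↦ μ ∘ θ₁` and `Φ₂ : μ ↦ μ ∘ θ₂` are mutually inverse Riesz isomorphisms. -/
theorem charges_independent_of_weak_unit
    {E : Type u} [Lattice E] [AddCommGroup E] [Module ℝ E]
    [CovariantClass E E (· + ·) (· ≤ ·)] [PosSMulMono ℝ E]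
    {F : Type v} [ConditionallyCompleteLattice F] [AddCommGroup F] [Module ℝ F]
    [CovariantClass F F (· + ·) (· ≤ ·)] [PosSMulMono ℝ F]
    (hppp : HasPPP E) (e₁ e₂ : E) (h₁ : IsWeakUnit e₁) (h₂ : IsWeakUnit e₂) :
    -- (a) θ₁ and θ₂ are mutually inverse lattice isomorphisms
    (∀ p ∈ Comp e₁, proj p e₂ ∈ Comp e₂ ∧ proj (proj p e₂) e₁ = p) ∧
    (∀ q ∈ Comp e₂, proj q e₁ ∈ Comp e₁ ∧ proj (proj q e₁) e₂ = q) ∧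
    (∀ p ∈ Comp e₁, ∀ q ∈ Comp e₁,
      proj (p ⊔ q) e₂ = proj p e₂ ⊔ proj q e₂ ∧
      proj (p ⊓ q) e₂ = proj p e₂ ⊓ proj q e₂) ∧
    (∀ p ∈ Comp e₂, ∀ q ∈ Comp e₂,
      proj (p ⊔ q) e₁ = proj p e₁ ⊔ proj q e₁ ∧
      proj (p ⊓ q) e₁ = proj p e₁ ⊓ proj q e₁) ∧
    -- (b) composition with θ₁, θ₂ preserves order bounded charges
    (∀ μ ∈ baSet (F := F) e₂, (fun p => μ (proj p e₂)) ∈ baSet (F := F) e₁) ∧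
    (∀ μ ∈ baSet (F := F) e₁, (fun q => μ (proj q e₁)) ∈ baSet (F := F) e₂) ∧
    -- (c) Φ₁ and Φ₂ are mutually inverse Riesz isomorphisms
    (∀ μ ∈ baSet (F := F) e₂, ∀ q ∈ Comp e₂, μ (proj (proj q e₁) e₂) = μ q) ∧
    (∀ μ ∈ baSet (F := F) e₁, ∀ p ∈ Comp e₁, μ (proj (proj p e₂) e₁) = μ p) ∧
    (∀ μ ∈ baSet (F := F) e₂, ∀ ν ∈ baSet (F := F) e₂,
      (baLe e₂ μ ν ↔ baLe e₁ (fun p => μ (proj p e₂)) (fun p => ν (proj p e₂)))) ∧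
    (∀ μ ∈ baSet (F := F) e₂, ∀ ν ∈ baSet (F := F) e₂, ∀ η : E → F,
      IsLUBba e₂ {μ, ν} η →
      IsLUBba e₁ {fun p => μ (proj p e₂), fun p => ν (proj p e₂)}
        (fun p => η (proj p e₂))) :=
  charges_independent_of_weak_unit_general hppp e₁ e₂ h₁ h₂

end RieszPaper

end
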